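/- arXiv:1406.5153 — 3 statements merged into one kernel-verified Lean document; each statement's English description precedes it below -/
import Mathlib

section
/- Consider a finite edge set E with, for each edge e, a continuous non-decreasing per-unit latency ĥ_e : ℝ → ℝ and a batch count N_e ≥ 1. A flow x is in batch equilibrium iff it is in Wardrop equilibrium with respect to the latencies ĥ_e. That is: for every player type i and strategies S₁, S₂ ∈ 𝒮_i with x_i^{S₁} > 0, the condition [for all batch-index choices (b_e) with 1 ≤ b_e ≤ N_e, ∑_{e∈S₁} ĥ_e((b_e/N_e)·x_e) ≤ ∑_{e∈S₂} ĥ_e(x_e)] holds iff ∑_{e∈S₁} ĥ_e(x_e) ≤ ∑_{e∈S₂} ĥ_e(x_e). -/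
/-- In a non-atomic congestion game with finite edge set `E`, per-edge continuous
non-decreasing latencies `h e` and batch counts `N e ≥ 1`, a flow is in batch
equilibrium iff it is in Wardrop equilibrium w.r.t. the latencies `h e`:
for every player type `i` and strategies `S₁, S₂ ∈ 𝒮 i` with `f i S₁ > 0`, the
condition `∀ (b : E → ℕ), (∀ e, 1 ≤ b e ∧ b e ≤ N e) →
∑_{e∈S₁} h e ((b e / N e)·x e) ≤ ∑_{e∈S₂} h e (x e)` holds iff
`∑_{e∈S₁} h e (x e) ≤ ∑_{e∈S₂} h e (x e)`. -/
theorem batch_equilibrium_iff_wardrop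
    {E ι : Type*} [Fintype E] [Fintype ι] [DecidableEq E]
    (h : E → ℝ → ℝ) (N : E → ℕ) (hN : ∀ e, 1 ≤ N e)
    (hcont : ∀ e, ContinuousOn (h e) (Set.Ici (0:ℝ)))
    (hmono : ∀ e, MonotoneOn (h e) (Set.Ici (0:ℝ)))
    (𝒮 : ι → Finset (Finset E)) (d : ι → ℝ)
    (f : ι → Finset E → ℝ)
    (hfnonneg : ∀ i S, 0 ≤ f i S)
    (hdemand : ∀ i, ∑ S ∈ 𝒮 i, f i S = d i)
    (x : E → ℝ)
    (hx : ∀ e, x e = ∑ i, ∑ S ∈ (𝒮 i).filter (fun S => e ∈ S), f i S) :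
    ∀ i : ι, ∀ S₁ ∈ 𝒮 i, ∀ S₂ ∈ 𝒮 i, 0 < f i S₁ →
      ((∀ b : E → ℕ, (∀ e, 1 ≤ b e ∧ b e ≤ N e) →
          ∑ e ∈ S₁, h e ((b e / N e : ℝ) * x e) ≤ ∑ e ∈ S₂, h e (x e)) ↔
        ∑ e ∈ S₁, h e (x e) ≤ ∑ e ∈ S₂, h e (x e)) := by
  intro i S₁ _ S₂ _ _
  have hxnn : ∀ e, 0 ≤ x e := by
    intro e
    rw [hx e]
    exact Finset.sum_nonneg fun i _ => Finset.sum_nonneg fun S _ => hfnonneg i S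
  constructor
  · intro hb
    have := hb (fun e => N e) (fun e => ⟨hN e, le_refl _⟩)
    simpa [div_self (by exact_mod_cast (Nat.one_le_iff_ne_zero.mp (hN _)) : ((N _ : ℝ)) ≠ 0)] using this
  · intro hw b hble
    refine le_trans (Finset.sum_le_sum fun e _ => ?_) hw
    have hNpos : (0:ℝ) < N e := by exact_mod_cast hN e
    have hratio : (b e / N e : ℝ) ≤ 1 := by
      rw [div_le_one hNpos]; exact_mod_cast (hble e).2
    have hr0 : (0:ℝ) ≤ (b e / N e : ℝ) := by positivity
    have h1 : (0:ℝ) ≤ (b e / N e : ℝ) * x e := mul_nonneg hr0 (hxnn e)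
    have h2 : (b e / N e : ℝ) * x e ≤ x e := by
      nlinarith [hxnn e]
    exact hmono e h1 (hxnn e) h2
end

section
/- If x and x' are both flows in Wardrop equilibrium of a non-atomic congestion game with continuous, non-decreasing, non-negative latencies l_e, then they have equal social cost: ∑_e l_e(x_e)·x_e = ∑_e l_e(x'_e)·x'_e. -/
/-- If `f` and `f'` are both feasible flows in Wardrop equilibrium of a non-atomic
congestion game with continuous, non-decreasing, non-negative latencies, then they have
equal social cost: `∑_e l_e(x_e)·x_e = ∑_e l_e(x'_e)·x'_e`. -/
theorem wardrop_equilibria_same_cost {E ι : Type*} [Fintype E] [Fintype ι] [DecidableEq E]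
    (l : E → ℝ → ℝ)
    (hnonneg : ∀ e, ∀ z ∈ Set.Ici (0:ℝ), 0 ≤ l e z)
    (hmono : ∀ e, MonotoneOn (l e) (Set.Ici (0:ℝ)))
    (hcont : ∀ e, ContinuousOn (l e) (Set.Ici (0:ℝ)))
    (𝒮 : ι → Finset (Finset E)) (d : ι → ℝ)
    (flow : (ι → Finset E → ℝ) → E → ℝ)
    (hflow : ∀ g e, flow g e = ∑ i, ∑ S ∈ (𝒮 i).filter (fun S => e ∈ S), g i S)
    (f f' : ι → Finset E → ℝ)
    (hfeas : (∀ i S, 0 ≤ f i S) ∧ ∀ i, ∑ S ∈ 𝒮 i, f i S = d i)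
    (hfeas' : (∀ i S, 0 ≤ f' i S) ∧ ∀ i, ∑ S ∈ 𝒮 i, f' i S = d i)
    (heq : ∀ i : ι, ∀ S₁ ∈ 𝒮 i, ∀ S₂ ∈ 𝒮 i, 0 < f i S₁ →
        ∑ e ∈ S₁, l e (flow f e) ≤ ∑ e ∈ S₂, l e (flow f e))
    (heq' : ∀ i : ι, ∀ S₁ ∈ 𝒮 i, ∀ S₂ ∈ 𝒮 i, 0 < f' i S₁ →
        ∑ e ∈ S₁, l e (flow f' e) ≤ ∑ e ∈ S₂, l e (flow f' e)) :
    ∑ e : E, l e (flow f e) * flow f e = ∑ e : E, l e (flow f' e) * flow f' e := by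
  obtain ⟨hf0, hfd⟩ := hfeas
  obtain ⟨hf0', hfd'⟩ := hfeas'
  have hx : ∀ e, 0 ≤ flow f e := fun e => by
    rw [hflow]
    exact Finset.sum_nonneg fun i _ => Finset.sum_nonneg fun S _ => hf0 i S
  have hx' : ∀ e, 0 ≤ flow f' e := fun e => by
    rw [hflow]
    exact Finset.sum_nonneg fun i _ => Finset.sum_nonneg fun S _ => hf0' i S
  set L : E → ℝ := fun e => l e (flow f e) with hLdef
  set L' : E → ℝ := fun e => l e (flow f' e) with hL'def
  have hL0 : ∀ e, 0 ≤ L e := fun e => hnonneg e _ (hx e)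
  have hL0' : ∀ e, 0 ≤ L' e := fun e => hnonneg e _ (hx' e)
  -- swap sums: edge-based cost equals path-based cost
  have hswap : ∀ (M : E → ℝ) (g : ι → Finset E → ℝ),
      ∑ e : E, M e * flow g e = ∑ i, ∑ S ∈ 𝒮 i, g i S * ∑ e ∈ S, M e := by
    intro M g
    simp only [hflow, Finset.mul_sum]
    rw [Finset.sum_comm]
    refine Finset.sum_congr rfl fun i _ => ?_
    calc ∑ e : E, ∑ S ∈ (𝒮 i).filter (fun S => e ∈ S), M e * g i S
        = ∑ e : E, ∑ S ∈ 𝒮 i, if e ∈ S then M e * g i S else 0 := by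
          simp [Finset.sum_filter]
      _ = ∑ S ∈ 𝒮 i, ∑ e : E, if e ∈ S then M e * g i S else 0 := Finset.sum_comm
      _ = ∑ S ∈ 𝒮 i, g i S * ∑ e ∈ S, M e := by
          refine Finset.sum_congr rfl fun S _ => ?_
          rw [Finset.sum_ite_mem, Finset.univ_inter, Finset.mul_sum]
          exact Finset.sum_congr rfl fun e _ => by ring
      _ = ∑ S ∈ 𝒮 i, ∑ e ∈ S, g i S * M e :=
          Finset.sum_congr rfl fun S _ => Finset.mul_sum _ _ _
  -- variational inequality
  have key : ∀ (g g' : ι → Finset E → ℝ), (∀ i S, 0 ≤ g i S) → (∀ i S, 0 ≤ g' i S) →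
      (∀ i, ∑ S ∈ 𝒮 i, g i S = ∑ S ∈ 𝒮 i, g' i S) →
      ∀ (M : E → ℝ), (∀ e, 0 ≤ M e) →
      (∀ i, ∀ S₁ ∈ 𝒮 i, ∀ S₂ ∈ 𝒮 i, 0 < g i S₁ → ∑ e ∈ S₁, M e ≤ ∑ e ∈ S₂, M e) →
      ∑ i, ∑ S ∈ 𝒮 i, g i S * ∑ e ∈ S, M e ≤ ∑ i, ∑ S ∈ 𝒮 i, g' i S * ∑ e ∈ S, M e := by
    intro g g' hg hg' hsum M hM hopt
    refine Finset.sum_le_sum fun i _ => ?_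
    have hD0 : 0 ≤ ∑ S ∈ 𝒮 i, g i S :=
      Finset.sum_nonneg fun S _ => hg i S
    rcases hD0.eq_or_lt with h | h
    · have hz : ∀ S ∈ 𝒮 i, g i S = 0 :=
        (Finset.sum_eq_zero_iff_of_nonneg fun S _ => hg i S).mp h.symm
      have lhs0 : ∑ S ∈ 𝒮 i, g i S * ∑ e ∈ S, M e = 0 :=
        Finset.sum_eq_zero fun S hS => by rw [hz S hS, zero_mul]
      rw [lhs0]
      exact Finset.sum_nonneg fun S _ =>
        mul_nonneg (hg' i S) (Finset.sum_nonneg fun e _ => hM e)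
    · have hAT : ∀ T ∈ 𝒮 i,
          (∑ S ∈ 𝒮 i, g i S * ∑ e ∈ S, M e) ≤ (∑ S ∈ 𝒮 i, g i S) * ∑ e ∈ T, M e := by
        intro T hT
        rw [Finset.sum_mul]
        refine Finset.sum_le_sum fun S hS => ?_
        rcases (hg i S).eq_or_lt with h0 | h0
        · rw [← h0, zero_mul, zero_mul]
        · exact mul_le_mul_of_nonneg_left (hopt i S hS T hT h0) (hg i S)
      have hmul : (∑ S ∈ 𝒮 i, g i S) * (∑ S ∈ 𝒮 i, g i S * ∑ e ∈ S, M e) ≤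
          (∑ S ∈ 𝒮 i, g i S) * (∑ S ∈ 𝒮 i, g' i S * ∑ e ∈ S, M e) := by
        calc (∑ S ∈ 𝒮 i, g i S) * (∑ S ∈ 𝒮 i, g i S * ∑ e ∈ S, M e)
            = (∑ T ∈ 𝒮 i, g' i T) * (∑ S ∈ 𝒮 i, g i S * ∑ e ∈ S, M e) := by rw [hsum i]
          _ = ∑ T ∈ 𝒮 i, g' i T * (∑ S ∈ 𝒮 i, g i S * ∑ e ∈ S, M e) := Finset.sum_mul _ _ _
          _ ≤ ∑ T ∈ 𝒮 i, g' i T * ((∑ S ∈ 𝒮 i, g i S) * ∑ e ∈ T, M e) :=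
              Finset.sum_le_sum fun T hT =>
                mul_le_mul_of_nonneg_left (hAT T hT) (hg' i T)
          _ = (∑ S ∈ 𝒮 i, g i S) * (∑ T ∈ 𝒮 i, g' i T * ∑ e ∈ T, M e) := by
              rw [Finset.mul_sum]
              exact Finset.sum_congr rfl fun T _ => by ring
      exact le_of_mul_le_mul_left hmul h
  have hsums : ∀ i, ∑ S ∈ 𝒮 i, f i S = ∑ S ∈ 𝒮 i, f' i S := fun i => by
    rw [hfd i, hfd' i]
  have hsums' : ∀ i, ∑ S ∈ 𝒮 i, f' i S = ∑ S ∈ 𝒮 i, f i S := fun i => (hsums i).symm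
  have hAB : ∑ e : E, L e * flow f e ≤ ∑ e : E, L e * flow f' e := by
    rw [hswap L f, hswap L f']
    exact key f f' hf0 hf0' hsums L hL0 heq
  have hCD : ∑ e : E, L' e * flow f' e ≤ ∑ e : E, L' e * flow f e := by
    rw [hswap L' f', hswap L' f]
    exact key f' f hf0' hf0 hsums' L' hL0' heq'
  -- termwise: (L e - L' e) * (flow f e - flow f' e) = 0 for each e
  have hterm : ∀ e : E, 0 ≤ (L e - L' e) * (flow f e - flow f' e) := fun e => by
    rcases le_total (flow f e) (flow f' e) with h | h
    · have := hmono e (hx e) (hx' e) h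
      nlinarith
    · have := hmono e (hx' e) (hx e) h
      nlinarith
  have hTle : ∑ e : E, (L e - L' e) * (flow f e - flow f' e) ≤ 0 := by
    have : ∑ e : E, (L e - L' e) * (flow f e - flow f' e) =
        (∑ e : E, L e * flow f e - ∑ e : E, L e * flow f' e) +
        (∑ e : E, L' e * flow f' e - ∑ e : E, L' e * flow f e) := by
      rw [← Finset.sum_sub_distrib, ← Finset.sum_sub_distrib, ← Finset.sum_add_distrib]
      exact Finset.sum_congr rfl fun e _ => by ring
    rw [this]
    linarith
  have hT0 : ∀ e : E, (L e - L' e) * (flow f e - flow f' e) = 0 := by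
    have hsum0 : ∑ e : E, (L e - L' e) * (flow f e - flow f' e) = 0 :=
      le_antisymm hTle (Finset.sum_nonneg fun e _ => hterm e)
    intro e
    exact (Finset.sum_eq_zero_iff_of_nonneg fun e _ => hterm e).mp hsum0 e (Finset.mem_univ e)
  have hLL' : ∀ e, L e = L' e := fun e => by
    rcases eq_or_ne (flow f e) (flow f' e) with h | h
    · simp [hLdef, hL'def, h]
    · have := hT0 e
      have hne : flow f e - flow f' e ≠ 0 := sub_ne_zero.mpr h
      have : L e - L' e = 0 := by
        rcases mul_eq_zero.mp this with h1 | h1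
        · exact h1
        · exact absurd h1 hne
      linarith
  have hBC : ∑ e : E, L e * flow f' e = ∑ e : E, L' e * flow f' e :=
    Finset.sum_congr rfl fun e _ => by rw [hLL' e]
  have hDA : ∑ e : E, L' e * flow f e = ∑ e : E, L e * flow f e :=
    Finset.sum_congr rfl fun e _ => by rw [hLL' e]
  have : ∑ e : E, L e * flow f e = ∑ e : E, L' e * flow f' e := by linarith
  exact this
end

section
/- Let x be a flow in batch equilibrium of a batch system (N_e)_{e∈E} for a congestion game with non-negative, non-decreasing, continuously differentiable, convex latencies l_e, and let OPT denote the minimum of the social cost C(y) = ∑_e l_e(y_e)·y_e over all feasible flows. Then for every ε > 0 there is a choice of batch counts (N_e) such that the batch-system social cost Ĉ(x) = ∑_e (x_e/N_e) ∑_{b=1}^{N_e} l̂_e((b/N_e)·x_e) satisfies OPT ≤ Ĉ(x) ≤ OPT + ε. -/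
/-!
A batch equilibrium is, for its last batch, a Wardrop equilibrium for the marginal costs
`l̂_e(z) = l_e(z) + z l_e'(z)`, the derivatives of the convex edge costs `z ↦ l_e(z) z`. Summing
the gradient inequality of these convex costs against the Wardrop (variational) inequality shows
that such a flow has optimal social cost. On each edge the batch cost is a right Riemann sum of
`l̂_e` over `[0, x_e]`; since `l̂_e` is nondecreasing it exceeds `l_e(x_e) x_e` by at most
`(x_e / N) l̂_e(x_e)`, which is uniformly small once `N` is large because loads never exceed the
total demand.
-/

open Finset

theorem ConvexOn.add_mul_sub_le_of_hasDerivAt {s : Set ℝ} {f : ℝ → ℝ} {f' x y : ℝ}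
    (hf : ConvexOn ℝ s f) (hx : x ∈ s) (hy : y ∈ s) (hf' : HasDerivAt f f' x) :
    f x + f' * (y - x) ≤ f y := by
  rcases lt_trichotomy x y with hxy | rfl | hyx
  · have := hf.le_slope_of_hasDerivAt hx hy hxy hf'
    rw [slope_def_field, le_div_iff₀ (sub_pos.2 hxy)] at this
    linarith
  · simp
  · have := hf.slope_le_of_hasDerivAt hy hx hyx hf'
    rw [slope_def_field, div_le_iff₀ (sub_pos.2 hyx)] at this
    linarith

section RiemannSum

variable {F f' : ℝ → ℝ} {x : ℝ} {N : ℕ}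

private lemma div_mul_mem_Icc (hx : 0 ≤ x) (hN : N ≠ 0) {b : ℕ} (hb : b ≤ N) :
    (b / N : ℝ) * x ∈ Set.Icc 0 x := by
  have hb' : (b / N : ℝ) ≤ 1 := div_le_one_of_le₀ (by exact_mod_cast hb) (Nat.cast_nonneg N)
  exact ⟨by positivity, mul_le_of_le_one_left hx hb'⟩

private lemma sum_Icc_one_eq_sum_range (g : ℕ → ℝ) :
    ∑ b ∈ Icc 1 N, g b = ∑ b ∈ range N, g (b + 1) := by
  rw [range_eq_Ico, sum_Ico_add' g 0 N 1, zero_add, Ico_add_one_right_eq_Icc]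

private lemma increment_mem_Icc (hF : ConvexOn ℝ (Set.Icc 0 x) F)
    (hF' : ∀ z ∈ Set.Icc 0 x, HasDerivAt F (f' z) z) (hx : 0 ≤ x) (hN : N ≠ 0) {b : ℕ}
    (hb : b < N) :
    F (((b + 1 : ℕ) / N : ℝ) * x) - F ((b / N : ℝ) * x) ∈
      Set.Icc (x / N * f' ((b / N : ℝ) * x)) (x / N * f' (((b + 1 : ℕ) / N : ℝ) * x)) := by
  have hp := div_mul_mem_Icc hx hN hb.le
  have hq := div_mul_mem_Icc hx hN hb
  have hstep : ((b + 1 : ℕ) / N : ℝ) * x - (b / N : ℝ) * x = x / N := by push_cast; ring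
  have lower := hF.add_mul_sub_le_of_hasDerivAt hp hq (hF' _ hp)
  have upper := hF.add_mul_sub_le_of_hasDerivAt hq hp (hF' _ hq)
  rw [hstep] at lower
  rw [← neg_sub, hstep] at upper
  constructor <;> linarith

private lemma sum_range_increment (hN : N ≠ 0) (G : ℝ → ℝ) :
    ∑ b ∈ range N, (G (((b + 1 : ℕ) / N : ℝ) * x) - G ((b / N : ℝ) * x)) = G x - G 0 := by
  rw [sum_range_sub (fun b : ℕ => G ((b / N : ℝ) * x))]
  simp [hN]

theorem ConvexOn.sub_le_riemannSum (hF : ConvexOn ℝ (Set.Icc 0 x) F)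
    (hF' : ∀ z ∈ Set.Icc 0 x, HasDerivAt F (f' z) z) (hx : 0 ≤ x) (hN : N ≠ 0) :
    F x - F 0 ≤ x / N * ∑ b ∈ Icc 1 N, f' ((b / N : ℝ) * x) := by
  rw [← sum_range_increment hN F, sum_Icc_one_eq_sum_range, mul_sum]
  exact sum_le_sum fun b hb => (increment_mem_Icc hF hF' hx hN (mem_range.1 hb)).2

theorem ConvexOn.riemannSum_le (hF : ConvexOn ℝ (Set.Icc 0 x) F)
    (hF' : ∀ z ∈ Set.Icc 0 x, HasDerivAt F (f' z) z) (hx : 0 ≤ x) (hN : N ≠ 0) :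
    x / N * ∑ b ∈ Icc 1 N, f' ((b / N : ℝ) * x) ≤ F x - F 0 + x / N * (f' x - f' 0) := by
  have hshift : ∑ b ∈ range N, f' (((b + 1 : ℕ) / N : ℝ) * x) =
      ∑ b ∈ range N, f' ((b / N : ℝ) * x) + (f' x - f' 0) :=
    sub_eq_iff_eq_add'.1 (by rw [← sum_range_increment hN f', sum_sub_distrib])
  have hsteps := sum_le_sum fun b hb => (increment_mem_Icc hF hF' hx hN (mem_range.1 hb)).1
  rw [sum_range_increment hN F, ← mul_sum] at hsteps
  rw [sum_Icc_one_eq_sum_range, hshift, mul_add]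
  linarith

end RiemannSum

theorem Finset.sum_mul_le_sum_mul_of_pos_imp_le {α R : Type*} [Semiring R] [LinearOrder R]
    [IsOrderedRing R] {s : Finset α} {c f g : α → R}
    (hf : ∀ a ∈ s, 0 ≤ f a) (hg : ∀ a ∈ s, 0 ≤ g a) (hfg : ∑ a ∈ s, f a = ∑ a ∈ s, g a)
    (hc : ∀ a ∈ s, ∀ b ∈ s, 0 < f a → c a ≤ c b) :
    ∑ a ∈ s, c a * f a ≤ ∑ a ∈ s, c a * g a := by
  rcases s.eq_empty_or_nonempty with rfl | hs
  · simp
  obtain ⟨m, hm, hmin⟩ := s.exists_min_image c hs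
  calc ∑ a ∈ s, c a * f a ≤ ∑ a ∈ s, c m * f a := sum_le_sum fun a ha => by
        rcases (hf a ha).eq_or_lt with h | h
        · simp [← h]
        · exact mul_le_mul_of_nonneg_right (hc a ha m hm h) h.le
    _ = ∑ a ∈ s, c m * g a := by rw [← mul_sum, ← mul_sum, hfg]
    _ ≤ ∑ a ∈ s, c a * g a :=
        sum_le_sum fun a ha => mul_le_mul_of_nonneg_right (hmin a ha) (hg a ha)

noncomputable def marginalCost (l : ℝ → ℝ) (z : ℝ) : ℝ := l z + z * deriv l z

noncomputable def batchCost (l : ℝ → ℝ) (N : ℕ) (x : ℝ) : ℝ :=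
  x / N * ∑ b ∈ Icc 1 N, marginalCost l ((b / N : ℝ) * x)

theorem hasDerivAt_mul_id_marginalCost {l : ℝ → ℝ} {z : ℝ} (h : DifferentiableAt ℝ l z) :
    HasDerivAt (fun z => l z * z) (marginalCost l z) z :=
  (h.hasDerivAt.mul (hasDerivAt_id' z)).congr_deriv (by simp only [marginalCost]; ring)

structure IsConvexLatency (l : ℝ → ℝ) : Prop where
  nonneg : ∀ z ∈ Set.Ici (0 : ℝ), 0 ≤ l z
  monotoneOn : MonotoneOn l (Set.Ici 0)
  differentiableAt : ∀ z ∈ Set.Ici (0 : ℝ), DifferentiableAt ℝ l z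
  convexOn : ConvexOn ℝ (Set.Ici 0) l

namespace IsConvexLatency

variable {l : ℝ → ℝ} (hl : IsConvexLatency l) {x y : ℝ}
include hl

theorem convexOn_mul_id : ConvexOn ℝ (Set.Ici 0) (fun z => l z * z) :=
  hl.convexOn.mul (convexOn_id (convex_Ici 0)) hl.nonneg (fun _ hz => hz)
    fun _ hi _ hj hij => hl.monotoneOn hi hj hij.le

theorem add_marginalCost_mul_sub_le (hx : 0 ≤ x) (hy : 0 ≤ y) :
    l x * x + marginalCost l x * (y - x) ≤ l y * y :=
  hl.convexOn_mul_id.add_mul_sub_le_of_hasDerivAt hx hy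
    (hasDerivAt_mul_id_marginalCost (hl.differentiableAt x hx))

theorem monotoneOn_marginalCost : MonotoneOn (marginalCost l) (Set.Ici 0) :=
  (hl.convexOn_mul_id.monotoneOn_deriv fun z hz =>
    (hasDerivAt_mul_id_marginalCost (hl.differentiableAt z hz)).differentiableAt).congr
    fun z hz => (hasDerivAt_mul_id_marginalCost (hl.differentiableAt z hz)).deriv

theorem marginalCost_nonneg (hx : 0 ≤ x) : 0 ≤ marginalCost l x := by
  have h0 : marginalCost l 0 = l 0 := by simp [marginalCost]
  exact (h0 ▸ hl.nonneg 0 Set.self_mem_Ici).trans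
    (hl.monotoneOn_marginalCost Set.self_mem_Ici hx hx)

variable {N : ℕ}

theorem mul_le_batchCost (hx : 0 ≤ x) (hN : N ≠ 0) : l x * x ≤ batchCost l N x := by
  simpa [batchCost] using
    (hl.convexOn_mul_id.subset Set.Icc_subset_Ici_self (convex_Icc 0 x)).sub_le_riemannSum
      (fun z hz => hasDerivAt_mul_id_marginalCost (hl.differentiableAt z hz.1)) hx hN

theorem batchCost_le {D : ℝ} (hx : 0 ≤ x) (hxD : x ≤ D) (hN : N ≠ 0) :
    batchCost l N x ≤ l x * x + D * marginalCost l D / N := by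
  have hriemann :=
    (hl.convexOn_mul_id.subset Set.Icc_subset_Ici_self (convex_Icc 0 x)).riemannSum_le
      (fun z hz => hasDerivAt_mul_id_marginalCost (hl.differentiableAt z hz.1)) hx hN
  have hlast : x * (marginalCost l x - marginalCost l 0) ≤ D * marginalCost l D :=
    calc x * (marginalCost l x - marginalCost l 0) ≤ x * marginalCost l x :=
          mul_le_mul_of_nonneg_left (by linarith [hl.marginalCost_nonneg le_rfl]) hx
      _ ≤ D * marginalCost l D :=
          mul_le_mul hxD (hl.monotoneOn_marginalCost hx (hx.trans hxD) hxD)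
            (hl.marginalCost_nonneg hx) (hx.trans hxD)
  rw [mul_zero, sub_zero] at hriemann
  refine hriemann.trans (add_le_add_right ?_ _)
  rw [div_mul_eq_mul_div]
  gcongr

end IsConvexLatency

section CongestionGame

variable {E ι : Type*} [Fintype ι] [DecidableEq E] (𝒮 : ι → Finset (Finset E))

def edgeLoad (g : ι → Finset E → ℝ) (e : E) : ℝ :=
  ∑ i, ∑ S ∈ (𝒮 i).filter (fun S => e ∈ S), g i S

def IsFeasible (d : ι → ℝ) (g : ι → Finset E → ℝ) : Prop :=
  (∀ i S, 0 ≤ g i S) ∧ ∀ i, ∑ S ∈ 𝒮 i, g i S = d i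

def IsWardropEquilibrium (c : E → ℝ) (g : ι → Finset E → ℝ) : Prop :=
  ∀ i, ∀ S₁ ∈ 𝒮 i, ∀ S₂ ∈ 𝒮 i, 0 < g i S₁ → ∑ e ∈ S₁, c e ≤ ∑ e ∈ S₂, c e

def socialCost [Fintype E] (l : E → ℝ → ℝ) (g : ι → Finset E → ℝ) : ℝ :=
  ∑ e, l e (edgeLoad 𝒮 g e) * edgeLoad 𝒮 g e

variable {𝒮} {d : ι → ℝ} {f g : ι → Finset E → ℝ}

theorem IsFeasible.edgeLoad_nonneg (hg : IsFeasible 𝒮 d g) (e : E) : 0 ≤ edgeLoad 𝒮 g e :=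
  sum_nonneg fun i _ => sum_nonneg fun S _ => hg.1 i S

theorem IsFeasible.edgeLoad_le (hg : IsFeasible 𝒮 d g) (e : E) : edgeLoad 𝒮 g e ≤ ∑ i, d i :=
  sum_le_sum fun i _ => (hg.2 i).symm ▸
    sum_le_sum_of_subset_of_nonneg (filter_subset _ _) fun S _ _ => hg.1 i S

theorem sum_mul_edgeLoad [Fintype E] (w : E → ℝ) (g : ι → Finset E → ℝ) :
    ∑ e, w e * edgeLoad 𝒮 g e = ∑ i, ∑ S ∈ 𝒮 i, (∑ e ∈ S, w e) * g i S := by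
  simp_rw [edgeLoad, mul_sum, sum_filter, sum_mul]
  rw [sum_comm]
  refine sum_congr rfl fun i _ => ?_
  rw [sum_comm]
  simp [sum_ite_mem]

theorem IsWardropEquilibrium.sum_mul_edgeLoad_le [Fintype E] {c : E → ℝ}
    (hW : IsWardropEquilibrium 𝒮 c f) (hf : IsFeasible 𝒮 d f) (hg : IsFeasible 𝒮 d g) :
    ∑ e, c e * edgeLoad 𝒮 f e ≤ ∑ e, c e * edgeLoad 𝒮 g e := by
  rw [sum_mul_edgeLoad, sum_mul_edgeLoad]
  exact sum_le_sum fun i _ => sum_mul_le_sum_mul_of_pos_imp_le (fun S _ => hf.1 i S)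
    (fun S _ => hg.1 i S) ((hf.2 i).trans (hg.2 i).symm) (hW i)

theorem IsWardropEquilibrium.socialCost_le [Fintype E] {l : E → ℝ → ℝ}
    (hl : ∀ e, IsConvexLatency (l e))
    (hW : IsWardropEquilibrium 𝒮 (fun e => marginalCost (l e) (edgeLoad 𝒮 f e)) f)
    (hf : IsFeasible 𝒮 d f) (hg : IsFeasible 𝒮 d g) : socialCost 𝒮 l f ≤ socialCost 𝒮 l g := by
  have hgrad := sum_le_sum fun e (_ : e ∈ univ) => (hl e).add_marginalCost_mul_sub_le
    (hf.edgeLoad_nonneg e) (hg.edgeLoad_nonneg e)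
  simp only [sum_add_distrib, mul_sub, sum_sub_distrib] at hgrad
  have := hW.sum_mul_edgeLoad_le hf hg
  unfold socialCost
  linarith

end CongestionGame

theorem batch_equilibrium_near_optimal_general {E ι : Type*} [Fintype E] [Fintype ι] [DecidableEq E]
    (l : E → ℝ → ℝ)
    (hnonneg : ∀ e, ∀ z ∈ Set.Ici (0:ℝ), 0 ≤ l e z)
    (hmono : ∀ e, MonotoneOn (l e) (Set.Ici (0:ℝ)))
    (hdiff : ∀ e, ∀ z ∈ Set.Ici (0:ℝ), DifferentiableAt ℝ (l e) z)
    (hconv : ∀ e, ConvexOn ℝ (Set.Ici (0:ℝ)) (l e))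
    (𝒮 : ι → Finset (Finset E)) (d : ι → ℝ)
    (flow : (ι → Finset E → ℝ) → E → ℝ)
    (hflow : ∀ g e, flow g e = ∑ i, ∑ S ∈ (𝒮 i).filter (fun S => e ∈ S), g i S)
    (feasible : (ι → Finset E → ℝ) → Prop)
    (hfeas : ∀ g, feasible g ↔ (∀ i S, 0 ≤ g i S) ∧ ∀ i, ∑ S ∈ 𝒮 i, g i S = d i)
    (OPT : ℝ)
    (hOPT : IsLeast ((fun g => ∑ e : E, l e (flow g e) * flow g e) '' {g | feasible g}) OPT)
    (ε : ℝ) (hε : 0 < ε) :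
    ∃ N : E → ℕ, (∀ e, 1 ≤ N e) ∧
      ∀ f, feasible f →
        -- f is in batch equilibrium w.r.t. the batch system N
        (∀ i : ι, ∀ S₁ ∈ 𝒮 i, ∀ S₂ ∈ 𝒮 i, 0 < f i S₁ →
          ∀ b : E → ℕ, (∀ e, 1 ≤ b e ∧ b e ≤ N e) →
            ∑ e ∈ S₁,
                (l e ((b e / N e : ℝ) * flow f e) +
                  ((b e / N e : ℝ) * flow f e) * deriv (l e) ((b e / N e : ℝ) * flow f e)) ≤
              ∑ e ∈ S₂, (l e (flow f e) + flow f e * deriv (l e) (flow f e))) →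
        OPT ≤ (∑ e : E, (flow f e / N e) * ∑ b ∈ Finset.Icc 1 (N e),
                (l e ((b / N e : ℝ) * flow f e) +
                  ((b / N e : ℝ) * flow f e) * deriv (l e) ((b / N e : ℝ) * flow f e))) ∧
          (∑ e : E, (flow f e / N e) * ∑ b ∈ Finset.Icc 1 (N e),
                (l e ((b / N e : ℝ) * flow f e) +
                  ((b / N e : ℝ) * flow f e) * deriv (l e) ((b / N e : ℝ) * flow f e))) ≤
            OPT + ε := by
  obtain rfl : flow = edgeLoad 𝒮 := funext₂ hflow
  obtain rfl : feasible = IsFeasible 𝒮 d := funext fun g => propext (hfeas g)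
  obtain ⟨g, hg, rfl⟩ := hOPT.1
  have hl e : IsConvexLatency (l e) := ⟨hnonneg e, hmono e, hdiff e, hconv e⟩
  set D := ∑ i, d i
  set K := ∑ e, D * marginalCost (l e) D
  obtain ⟨N, hNK, hN⟩ : ∃ N : ℕ, K / ε ≤ N ∧ N ≠ 0 :=
    ⟨⌈K / ε⌉₊ + 1, by push_cast; linarith [Nat.le_ceil (K / ε)], Nat.succ_ne_zero _⟩
  have hKN : K / N ≤ ε := by
    rw [div_le_iff₀ hε] at hNK
    rw [div_le_iff₀ (by positivity)]
    linarith
  refine ⟨fun _ => N, fun _ => Nat.one_le_iff_ne_zero.2 hN, fun f hf hbatch => ?_⟩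
  have hW : IsWardropEquilibrium 𝒮 (fun e => marginalCost (l e) (edgeLoad 𝒮 f e)) f :=
    fun i S₁ h₁ S₂ h₂ hpos => by
      simpa [marginalCost, hN] using
        hbatch i S₁ h₁ S₂ h₂ hpos (fun _ => N) fun _ => ⟨Nat.one_le_iff_ne_zero.2 hN, le_rfl⟩
  refine ⟨(hOPT.2 ⟨f, hf, rfl⟩).trans (sum_le_sum fun e _ =>
    (hl e).mul_le_batchCost (hf.edgeLoad_nonneg e) hN), ?_⟩
  calc _ ≤ ∑ e, (l e (edgeLoad 𝒮 f e) * edgeLoad 𝒮 f e + D * marginalCost (l e) D / N) :=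
        sum_le_sum fun e _ => (hl e).batchCost_le (hf.edgeLoad_nonneg e) (hf.edgeLoad_le e) hN
    _ = socialCost 𝒮 l f + K / N := by rw [sum_add_distrib, sum_div]; rfl
    _ ≤ socialCost 𝒮 l g + ε := add_le_add (hW.socialCost_le hl hf hg) hKN

/-- Theorem 1: for latencies `l_e` non-negative, non-decreasing, continuously
differentiable and convex, with `OPT` the minimum social cost over feasible flows,
for every `ε > 0` there is a choice of batch counts `(N_e)` such that any feasible flow
in batch equilibrium has batch-system social cost
`Ĉ(x) = ∑_e (x_e/N_e) ∑_{b=1}^{N_e} l̂_e((b/N_e)·x_e)` with `OPT ≤ Ĉ(x) ≤ OPT + ε`,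
where `l̂_e(z) = l_e(z) + z·l_e'(z)`. -/
theorem batch_equilibrium_near_optimal {E ι : Type*} [Fintype E] [Fintype ι] [DecidableEq E]
    (l : E → ℝ → ℝ)
    (hnonneg : ∀ e, ∀ z ∈ Set.Ici (0:ℝ), 0 ≤ l e z)
    (hmono : ∀ e, MonotoneOn (l e) (Set.Ici (0:ℝ)))
    (hdiff : ∀ e, ∀ z ∈ Set.Ici (0:ℝ), DifferentiableAt ℝ (l e) z)
    (hcont : ∀ e, ContinuousOn (deriv (l e)) (Set.Ici (0:ℝ)))
    (hconv : ∀ e, ConvexOn ℝ (Set.Ici (0:ℝ)) (l e))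
    (𝒮 : ι → Finset (Finset E)) (d : ι → ℝ) (hd : ∀ i, 0 ≤ d i)
    (flow : (ι → Finset E → ℝ) → E → ℝ)
    (hflow : ∀ g e, flow g e = ∑ i, ∑ S ∈ (𝒮 i).filter (fun S => e ∈ S), g i S)
    (feasible : (ι → Finset E → ℝ) → Prop)
    (hfeas : ∀ g, feasible g ↔ (∀ i S, 0 ≤ g i S) ∧ ∀ i, ∑ S ∈ 𝒮 i, g i S = d i)
    (OPT : ℝ)
    (hOPT : IsLeast ((fun g => ∑ e : E, l e (flow g e) * flow g e) '' {g | feasible g}) OPT)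
    (ε : ℝ) (hε : 0 < ε) :
    ∃ N : E → ℕ, (∀ e, 1 ≤ N e) ∧
      ∀ f, feasible f →
        -- f is in batch equilibrium w.r.t. the batch system N
        (∀ i : ι, ∀ S₁ ∈ 𝒮 i, ∀ S₂ ∈ 𝒮 i, 0 < f i S₁ →
          ∀ b : E → ℕ, (∀ e, 1 ≤ b e ∧ b e ≤ N e) →
            ∑ e ∈ S₁,
                (l e ((b e / N e : ℝ) * flow f e) +
                  ((b e / N e : ℝ) * flow f e) * deriv (l e) ((b e / N e : ℝ) * flow f e)) ≤
              ∑ e ∈ S₂, (l e (flow f e) + flow f e * deriv (l e) (flow f e))) →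
        OPT ≤ (∑ e : E, (flow f e / N e) * ∑ b ∈ Finset.Icc 1 (N e),
                (l e ((b / N e : ℝ) * flow f e) +
                  ((b / N e : ℝ) * flow f e) * deriv (l e) ((b / N e : ℝ) * flow f e))) ∧
          (∑ e : E, (flow f e / N e) * ∑ b ∈ Finset.Icc 1 (N e),
                (l e ((b / N e : ℝ) * flow f e) +
                  ((b / N e : ℝ) * flow f e) * deriv (l e) ((b / N e : ℝ) * flow f e))) ≤
            OPT + ε :=
  batch_equilibrium_near_optimal_general l hnonneg hmono hdiff hconv 𝒮 d flow hflow feasible hfeas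
    OPT hOPT ε hε
end
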